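/- Let X ∈ R^{n×r}, Z ∈ R^{n×p}, U ∈ O(p,r), Γ^{1/2} = diag(√λ1,...,√λr) with λ1 ≥ ... ≥ λr > 0, and Û, U ∈ O(p,r). Then ⟨UΓ^{1/2}(n^{-1}XᵀX − I_r)Γ^{1/2}Uᵀ, ÛÛᵀ − UUᵀ⟩ ≤ (λ1/2)·‖n^{-1}XᵀX − I_r‖·‖UUᵀ − ÛÛᵀ‖_F², where ‖·‖ is the spectral norm. -/

import Mathlib

open Matrix

/-! With `S = n⁻¹XᵀX - 1`, `D = Γ^{1/2}` and `R = (1 - ÛÛᵀ)U`, orthonormality gives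
`Uᵀ(ÛÛᵀ - UUᵀ)U = -RᵀR`, so the cross term is `-tr(S (RD)ᵀ(RD))`. Row by row this is bounded by
`‖S‖ tr((RD)ᵀ(RD)) = ‖S‖ ∑ λᵢ (RᵀR)ᵢᵢ ≤ λ₁ ‖S‖ tr(RᵀR)`, and
`‖UUᵀ - ÛÛᵀ‖_F² = 2 tr(UUᵀ(1 - ÛÛᵀ)) = 2 tr(RᵀR)`. -/

/-- Frobenius norm of a real matrix. -/
noncomputable def frob {m n : ℕ} (A : Matrix (Fin m) (Fin n) ℝ) : ℝ :=
  Real.sqrt (∑ i, ∑ j, (A i j) ^ 2)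

/-- Spectral (operator) norm of a square real matrix. -/
noncomputable def specNorm {r : ℕ} (M : Matrix (Fin r) (Fin r) ℝ) : ℝ :=
  ‖Matrix.toEuclideanCLM (𝕜 := ℝ) M‖

section Spectral

variable {r : ℕ}

lemma abs_dotProduct_mulVec_le_specNorm_mul (M : Matrix (Fin r) (Fin r) ℝ) (v : Fin r → ℝ) :
    |v ⬝ᵥ M *ᵥ v| ≤ specNorm M * (v ⬝ᵥ v) := by
  set x : EuclideanSpace ℝ (Fin r) := WithLp.toLp 2 v
  have hx : ‖x‖ ^ 2 = v ⬝ᵥ v := by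
    rw [← real_inner_self_eq_norm_sq, EuclideanSpace.inner_eq_star_dotProduct]
    simp [x]
  calc |v ⬝ᵥ M *ᵥ v| = |inner ℝ x (toEuclideanCLM (𝕜 := ℝ) M x)| := by
        rw [inner_toEuclideanCLM]
    _ ≤ ‖x‖ * ‖toEuclideanCLM (𝕜 := ℝ) M x‖ := abs_real_inner_le_norm _ _
    _ ≤ ‖x‖ * (specNorm M * ‖x‖) := by gcongr; exact (toEuclideanCLM (𝕜 := ℝ) M).le_opNorm x
    _ = specNorm M * (v ⬝ᵥ v) := by rw [← hx]; ring

lemma trace_mul_transpose_mul_self_eq_sum {m : Type*} [Fintype m]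
    (S : Matrix (Fin r) (Fin r) ℝ) (C : Matrix m (Fin r) ℝ) :
    trace (S * (Cᵀ * C)) = ∑ i, C i ⬝ᵥ S *ᵥ C i := by
  rw [← Matrix.mul_assoc, trace_mul_comm, ← Matrix.mul_assoc]
  simp only [trace, diag, mul_apply, transpose_apply, dotProduct, mulVec, Finset.sum_mul,
    Finset.mul_sum]
  refine Finset.sum_congr rfl fun i _ => ?_
  rw [Finset.sum_comm]
  exact Finset.sum_congr rfl fun j _ => Finset.sum_congr rfl fun k _ => by ring

lemma neg_specNorm_mul_trace_le_trace_mul {m : Type*} [Fintype m]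
    (S : Matrix (Fin r) (Fin r) ℝ) (C : Matrix m (Fin r) ℝ) :
    -(specNorm S * trace (Cᵀ * C)) ≤ trace (S * (Cᵀ * C)) := by
  have hC : trace (Cᵀ * C) = ∑ i, C i ⬝ᵥ C i := by
    simpa using trace_mul_transpose_mul_self_eq_sum 1 C
  rw [hC, trace_mul_transpose_mul_self_eq_sum, Finset.mul_sum, ← Finset.sum_neg_distrib]
  exact Finset.sum_le_sum fun i _ =>
    neg_le_of_abs_le (abs_dotProduct_mulVec_le_specNorm_mul S (C i))

end Spectral

section Trace

variable {m k : Type*} [Fintype m] [Fintype k]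

lemma trace_transpose_mul_mul_transpose_mul (U : Matrix m k ℝ) (A : Matrix k k ℝ)
    (W : Matrix m m ℝ) : trace ((U * A * Uᵀ)ᵀ * W) = trace (Aᵀ * (Uᵀ * W * U)) := by
  rw [transpose_mul, transpose_mul, transpose_transpose, Matrix.mul_assoc, Matrix.mul_assoc,
    trace_mul_comm]
  simp only [Matrix.mul_assoc]

lemma trace_transpose_mul_self_mul_diagonal_le [DecidableEq k] (R : Matrix m k ℝ) (d : k → ℝ)
    {c : ℝ} (hd : ∀ i, d i ^ 2 ≤ c) :
    trace ((R * diagonal d)ᵀ * (R * diagonal d)) ≤ c * trace (Rᵀ * R) := by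
  simp only [trace, diag, mul_apply (M := (R * diagonal d)ᵀ), mul_apply (M := Rᵀ), transpose_apply,
    mul_diagonal, Finset.mul_sum]
  refine Finset.sum_le_sum fun i _ => Finset.sum_le_sum fun j _ => ?_
  nlinarith [hd i, mul_self_nonneg (R j i)]

end Trace

section Projection

variable {m k : Type*} [Fintype m] [Fintype k] [DecidableEq k] {U V : Matrix m k ℝ}

lemma isIdempotentElem_mul_transpose (hV : Vᵀ * V = 1) : IsIdempotentElem (V * Vᵀ) := by
  rw [IsIdempotentElem, Matrix.mul_assoc, ← Matrix.mul_assoc Vᵀ, hV, Matrix.one_mul]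

variable [DecidableEq m]

lemma transpose_mul_one_sub_mul_eq (hU : Uᵀ * U = 1) (hV : Vᵀ * V = 1) :
    ((1 - V * Vᵀ) * U)ᵀ * ((1 - V * Vᵀ) * U) = 1 - Uᵀ * (V * Vᵀ) * U := by
  have hP := (isIdempotentElem_mul_transpose hV).one_sub
  rw [transpose_mul, transpose_sub, transpose_one, transpose_mul, transpose_transpose,
    Matrix.mul_assoc, ← Matrix.mul_assoc (1 - V * Vᵀ), hP.eq, Matrix.sub_mul, Matrix.mul_sub,
    Matrix.one_mul, hU]
  simp only [Matrix.mul_assoc]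

lemma transpose_mul_sub_mul_eq_neg (hU : Uᵀ * U = 1) (hV : Vᵀ * V = 1) :
    Uᵀ * (V * Vᵀ - U * Uᵀ) * U = -(((1 - V * Vᵀ) * U)ᵀ * ((1 - V * Vᵀ) * U)) := by
  rw [transpose_mul_one_sub_mul_eq hU hV, Matrix.mul_sub, Matrix.sub_mul, ← Matrix.mul_assoc Uᵀ U,
    hU, Matrix.one_mul, hU, neg_sub]

lemma trace_transpose_mul_self_sub_eq (hU : Uᵀ * U = 1) (hV : Vᵀ * V = 1) :
    trace ((U * Uᵀ - V * Vᵀ)ᵀ * (U * Uᵀ - V * Vᵀ)) =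
      2 * trace (((1 - V * Vᵀ) * U)ᵀ * ((1 - V * Vᵀ) * U)) := by
  have htrU : trace (U * Uᵀ) = Fintype.card k := by rw [trace_mul_comm, hU, trace_one]
  have htrV : trace (V * Vᵀ) = Fintype.card k := by rw [trace_mul_comm, hV, trace_one]
  have hcross : trace (V * Vᵀ * (U * Uᵀ)) = trace (Uᵀ * (V * Vᵀ) * U) := by
    rw [← Matrix.mul_assoc, trace_mul_comm]
    simp only [Matrix.mul_assoc]
  rw [transpose_mul_one_sub_mul_eq hU hV, transpose_sub, transpose_mul, transpose_mul,
    transpose_transpose, transpose_transpose, Matrix.sub_mul, Matrix.mul_sub, Matrix.mul_sub,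
    (isIdempotentElem_mul_transpose hU).eq, (isIdempotentElem_mul_transpose hV).eq]
  simp only [trace_sub, trace_one, htrU, htrV, trace_mul_comm (U * Uᵀ) (V * Vᵀ), hcross]
  ring

lemma trace_conj_transpose_mul_sub_eq_neg (hU : Uᵀ * U = 1) (hV : Vᵀ * V = 1)
    {S : Matrix k k ℝ} (hS : Sᵀ = S) (d : k → ℝ) :
    trace ((U * diagonal d * S * diagonal d * Uᵀ)ᵀ * (V * Vᵀ - U * Uᵀ)) =
      -trace (S * (((1 - V * Vᵀ) * U * diagonal d)ᵀ * ((1 - V * Vᵀ) * U * diagonal d))) := by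
  set R := (1 - V * Vᵀ) * U
  set D := diagonal d
  have hD : Dᵀ = D := diagonal_transpose d
  have hW : Uᵀ * (V * Vᵀ - U * Uᵀ) * U = -(Rᵀ * R) := transpose_mul_sub_mul_eq_neg hU hV
  have hRD : (R * D)ᵀ * (R * D) = D * (Rᵀ * R) * D := by
    rw [transpose_mul, hD]
    simp only [Matrix.mul_assoc]
  rw [show U * D * S * D * Uᵀ = U * (D * S * D) * Uᵀ by simp only [Matrix.mul_assoc],
    trace_transpose_mul_mul_transpose_mul, hW, hRD, transpose_mul, transpose_mul, hS, hD,
    Matrix.mul_neg, trace_neg, Matrix.mul_assoc, trace_mul_comm]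
  simp only [Matrix.mul_assoc]

end Projection

lemma frob_sq_eq_trace_transpose_mul {m n : ℕ} (A : Matrix (Fin m) (Fin n) ℝ) :
    frob A ^ 2 = trace (Aᵀ * A) := by
  rw [frob, Real.sq_sqrt (by positivity), Finset.sum_comm]
  simp only [trace, diag, mul_apply, transpose_apply, sq]

theorem sample_covariance_cross_term_bound_general {n p r : ℕ} (hr : 0 < r)
    (X : Matrix (Fin n) (Fin r) ℝ)
    (U Uhat : Matrix (Fin p) (Fin r) ℝ)
    (hU : Uᵀ * U = 1) (hUhat : Uhatᵀ * Uhat = 1)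
    (l : Fin r → ℝ) (hpos : ∀ i, 0 < l i)
    (hmono : ∀ i j : Fin r, i ≤ j → l j ≤ l i) :
    trace ((U * diagonal (fun i => Real.sqrt (l i)) *
          ((n : ℝ)⁻¹ • (Xᵀ * X) - 1) * diagonal (fun i => Real.sqrt (l i)) * Uᵀ)ᵀ *
        (Uhat * Uhatᵀ - U * Uᵀ)) ≤
      (l ⟨0, hr⟩) / 2 * specNorm ((n : ℝ)⁻¹ • (Xᵀ * X) - 1) *
        frob (U * Uᵀ - Uhat * Uhatᵀ) ^ 2 := by
  set S := (n : ℝ)⁻¹ • (Xᵀ * X) - 1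
  set R := (1 - Uhat * Uhatᵀ) * U
  have hS : Sᵀ = S := by simp [S, transpose_sub, transpose_smul, transpose_mul]
  have hl : ∀ i, Real.sqrt (l i) ^ 2 ≤ l ⟨0, hr⟩ := fun i => by
    rw [Real.sq_sqrt (hpos i).le]
    exact hmono _ _ (Nat.zero_le _)
  rw [trace_conj_transpose_mul_sub_eq_neg hU hUhat hS, frob_sq_eq_trace_transpose_mul,
    trace_transpose_mul_self_sub_eq hU hUhat]
  set C := R * diagonal fun i => Real.sqrt (l i)
  calc -trace (S * (Cᵀ * C))
      ≤ specNorm S * trace (Cᵀ * C) := neg_le.mp (neg_specNorm_mul_trace_le_trace_mul S C)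
    _ ≤ specNorm S * (l ⟨0, hr⟩ * trace (Rᵀ * R)) := by
        gcongr
        · exact norm_nonneg _
        · exact trace_transpose_mul_self_mul_diagonal_le R _ hl
    _ = l ⟨0, hr⟩ / 2 * specNorm S * (2 * trace (Rᵀ * R)) := by ring

/-- `⟨UΓ^{1/2}(n⁻¹XᵀX − I)Γ^{1/2}Uᵀ, ÛÛᵀ − UUᵀ⟩ ≤
(λ1/2)·‖n⁻¹XᵀX − I‖·‖UUᵀ − ÛÛᵀ‖_F²`. -/
theorem sample_covariance_cross_term_bound {n p r : ℕ} (hr : 0 < r) (hn : 0 < n)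
    (X : Matrix (Fin n) (Fin r) ℝ) (Z : Matrix (Fin n) (Fin p) ℝ)
    (U Uhat : Matrix (Fin p) (Fin r) ℝ)
    (hU : Uᵀ * U = 1) (hUhat : Uhatᵀ * Uhat = 1)
    (l : Fin r → ℝ) (hpos : ∀ i, 0 < l i)
    (hmono : ∀ i j : Fin r, i ≤ j → l j ≤ l i) :
    trace ((U * diagonal (fun i => Real.sqrt (l i)) *
          ((n : ℝ)⁻¹ • (Xᵀ * X) - 1) * diagonal (fun i => Real.sqrt (l i)) * Uᵀ)ᵀ *
        (Uhat * Uhatᵀ - U * Uᵀ)) ≤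
      (l ⟨0, hr⟩) / 2 * specNorm ((n : ℝ)⁻¹ • (Xᵀ * X) - 1) *
        frob (U * Uᵀ - Uhat * Uhatᵀ) ^ 2 :=
  sample_covariance_cross_term_bound_general hr X U Uhat hU hUhat l hpos hmono
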